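/- Let d ∈ {1, 2, 3}, fix λ > 0, and let S : ℝ → ℝ be continuous on [−4dλ, 0] with S(0) = 1, |S(z)| < 1 for all z ∈ [−4dλ, 0), and S differentiable at 0 with S′(0) = 1. Then there exists a constant C̃ > 0 (depending only on S, d and λ) such that for every integer K ≥ 2, with Δt = λ/K², s_k = −4ΔtK² Σ_{j=1}^d sin²(π k_j/(2K)), and ⟨1, v_k⟩ = Σ_{i ∈ {1,…,K−1}^d} Π_{j=1}^d sin(π i_j k_j / K), one has K^{−d} Σ_{k ∈ {1,…,K−1}^d} ⟨1, v_k⟩ / (1 − |S(s_k)|) ≤ C̃·Δt^{−1}. -/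

import Mathlib

open Real

/-- The eigenvalue arguments `s_k = −Δt·λ_k^h` of the stability function, with
`Δt = λ/K²` and multi-index `k` with components `(k j) + 1 ∈ {1,…,K−1}`. -/
noncomputable def sVal (K d : ℕ) (lam : ℝ) (k : Fin d → Fin (K - 1)) : ℝ :=
  -(4 * (lam / (K : ℝ) ^ 2) * (K : ℝ) ^ 2
    * ∑ j, Real.sin (π * (((k j : ℕ) : ℝ) + 1) / (2 * K)) ^ 2)

/-- The sum of the entries of the discrete sine eigenvector `v_k`,
i.e. `⟨1, v_k⟩ = Σ_{i∈{1,…,K−1}^d} Π_j sin(π i_j k_j / K)`. -/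
noncomputable def onesDotV (K d : ℕ) (k : Fin d → Fin (K - 1)) : ℝ :=
  ∑ i : Fin d → Fin (K - 1),
    ∏ j, Real.sin (π * (((i j : ℕ) : ℝ) + 1) * (((k j : ℕ) : ℝ) + 1) / K)

/-!
With `θ = π m / K`, the sine sum `∑_{i<K} sin (i θ)` telescopes against `2 sin (θ/2)` to
`cos (θ/2) (1 - (-1)^m) / (2 sin (θ/2))`, so by Jordan's inequality `sin (θ/2) ≥ m/K`,
`⟨1, v_k⟩`, a product of such sums, lies in `[0, ∏_j K / k_j]`. Since `S(z) = 1 + z + o(z)`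
at `0` and `|S| < 1` is bounded away from `1` on compact subsets of `[-4dλ, 0)`, we get
`1 - |S(z)| ≥ c (-z)`, while Jordan's inequality again gives `-s_k ≥ 4λ ∑_j k_j² / K²`.
AM-GM, `∑_j k_j² ≥ d ∏_j k_j^{2/d}`, bounds each term by `K^{d+2} / (4cλd) ∏_j k_j^{-(1 + 2/d)}`,
and the sum over `k` by `ζ(1 + 2/d)^d` times that prefactor.
-/

open Finset

lemma le_sin_pi_div_two_mul {x : ℝ} (h0 : 0 ≤ x) (h1 : x ≤ 1) : x ≤ sin (π / 2 * x) :=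
  calc x = 2 / π * (π / 2 * x) := by field_simp
    _ ≤ sin (π / 2 * x) := mul_le_sin (by positivity) (by nlinarith [pi_pos])

lemma two_mul_sin_half_mul_sum_sin (θ : ℝ) (n : ℕ) :
    2 * sin (θ / 2) * ∑ i ∈ range n, sin ((i + 1) * θ)
      = cos (θ / 2) - cos ((n + 1 / 2) * θ) := by
  induction n with
  | zero => simp only [range_zero, sum_empty, mul_zero, CharP.cast_eq_zero]; ring_nf
  | succ n ih =>
    rw [sum_range_succ, mul_add, ih, mul_right_comm, two_mul_sin_mul_sin]
    push_cast
    ring_nf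

lemma sum_sin_pi_mul_div_bounds {K m : ℕ} (hm : 0 < m) (hmK : m < K) :
    0 ≤ ∑ i ∈ range (K - 1), sin (π * (i + 1) * m / K) ∧
      ∑ i ∈ range (K - 1), sin (π * (i + 1) * m / K) ≤ K / m := by
  set θ := π * m / K with hθ
  have hK : (0 : ℝ) < K := by exact_mod_cast hm.trans hmK
  have hmK' : (m : ℝ) / K ≤ 1 := by rw [div_le_one hK]; exact_mod_cast hmK.le
  have hhalf : θ / 2 = π / 2 * (m / K) := by rw [hθ]; ring
  have hsin : (m : ℝ) / K ≤ sin (θ / 2) := hhalf ▸ le_sin_pi_div_two_mul (by positivity) hmK'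
  have hclosed : 2 * sin (θ / 2) * ∑ i ∈ range (K - 1), sin (π * (i + 1) * m / K)
      = cos (θ / 2) * (1 - (-1) ^ m) := by
    have hlast : ((((K - 1 : ℕ) : ℝ) + 1 / 2) * θ) = m * π - θ / 2 := by
      rw [Nat.cast_sub (by omega), Nat.cast_one, hθ]; field_simp; ring
    simp_rw [show ∀ i : ℕ, π * ((i : ℝ) + 1) * m / K = (i + 1) * θ from fun i => by ring]
    rw [two_mul_sin_half_mul_sum_sin, hlast, cos_nat_mul_pi_sub]; ring
  have hcos : 0 ≤ cos (θ / 2) := cos_nonneg_of_neg_pi_div_two_le_of_le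
    (by rw [hhalf]; nlinarith [pi_pos, div_nonneg (Nat.cast_nonneg m) hK.le])
    (by rw [hhalf]; nlinarith [pi_pos])
  have hrhs : 0 ≤ cos (θ / 2) * (1 - (-1) ^ m) ∧ cos (θ / 2) * (1 - (-1) ^ m) ≤ 2 := by
    rcases neg_one_pow_eq_or ℝ m with h | h <;> rw [h] <;> constructor <;>
      nlinarith [cos_le_one (θ / 2)]
  have hs : 0 < sin (θ / 2) := lt_of_lt_of_le (by positivity) hsin
  set A := ∑ i ∈ range (K - 1), sin (π * (i + 1) * m / K)
  have hA : 0 ≤ A := (mul_nonneg_iff_of_pos_left (by positivity)).mp (hclosed ▸ hrhs.1)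
  refine ⟨hA, (le_div_iff₀ (by positivity)).mpr ?_⟩
  have : (m : ℝ) / K * A ≤ 1 := by nlinarith [mul_le_mul_of_nonneg_right hsin hA]
  rwa [div_mul_eq_mul_div, div_le_one hK, mul_comm] at this

lemma exists_neg_half_le_one_sub_abs {S : ℝ → ℝ} (hS0 : S 0 = 1) (hderiv : HasDerivAt S 1 0) :
    ∃ δ > 0, ∀ z, -δ < z → z < 0 → -z / 2 ≤ 1 - |S z| := by
  obtain ⟨δ, hδ, hnear⟩ := Metric.eventually_nhds_iff.mp
    ((hasDerivAt_iff_isLittleO.mp hderiv).def (by norm_num : (0 : ℝ) < 1 / 2))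
  refine ⟨min δ 1, by positivity, fun z hz hz0 => ?_⟩
  have hlin : |S z - 1 - z| ≤ -z / 2 := by
    have := hnear (show dist z 0 < δ by
      rw [Real.dist_eq, sub_zero, abs_of_neg hz0]; linarith [min_le_left δ 1])
    simpa [hS0, abs_of_neg hz0, div_eq_inv_mul] using this
  have hz1 : -1 < z := by linarith [min_le_right δ 1]
  rw [abs_le] at hlin
  rw [sub_nonneg.symm, show 1 - |S z| - -z / 2 = 1 + z / 2 - |S z| by ring, sub_nonneg, abs_le]
  constructor <;> linarith

lemma exists_pos_mul_neg_le_one_sub_abs {M : ℝ} (hM : 0 < M) {S : ℝ → ℝ}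
    (hcont : ContinuousOn S (Set.Icc (-M) 0)) (hS0 : S 0 = 1)
    (hSlt : ∀ z ∈ Set.Ico (-M) 0, |S z| < 1) (hderiv : HasDerivAt S 1 0) :
    ∃ c > 0, ∀ z ∈ Set.Ico (-M) 0, c * -z ≤ 1 - |S z| := by
  obtain ⟨δ, hδ, hnear⟩ := exists_neg_half_le_one_sub_abs hS0 hderiv
  have hcont' : ContinuousOn (fun z => 1 - |S z|) (Set.Icc (-M) (-δ)) :=
    continuousOn_const.sub (hcont.mono (Set.Icc_subset_Icc_right (by linarith))).abs
  obtain ⟨ε, hε, hfar⟩ := isCompact_Icc.exists_forall_le' hcont' (a := 0)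
    fun z hz => sub_pos.mpr (hSlt z ⟨hz.1, by linarith [hz.2]⟩)
  refine ⟨min (1 / 2) (ε / M), by positivity, fun z ⟨hzM, hz0⟩ => ?_⟩
  rcases lt_or_ge (-δ) z with hzδ | hzδ
  · calc min (1 / 2) (ε / M) * -z ≤ 1 / 2 * -z :=
          mul_le_mul_of_nonneg_right (min_le_left _ _) (by linarith)
      _ ≤ 1 - |S z| := by linarith [hnear z hzδ hz0]
  · calc min (1 / 2) (ε / M) * -z ≤ ε / M * M :=
          mul_le_mul (min_le_right _ _) (by linarith) (by linarith) (by positivity)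
      _ = ε := by field_simp
      _ ≤ 1 - |S z| := hfar z ⟨hzM, hzδ⟩

lemma prod_rpow_one_add_two_div_le {ι : Type*} [Fintype ι] [Nonempty ι] {y : ι → ℝ}
    (hy : ∀ i, 0 ≤ y i) :
    ∏ i, y i ^ (1 + 2 / (Fintype.card ι : ℝ))
      ≤ (∏ i, y i) * (∑ i, y i ^ 2) / Fintype.card ι := by
  set n : ℝ := (Fintype.card ι : ℝ)
  have hn : 0 < n := by simp only [n]; exact_mod_cast Fintype.card_pos
  have hamgm := geom_mean_le_arith_mean univ (fun _ => 1) (fun i => y i ^ 2)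
    (fun _ _ => zero_le_one) (by simpa using Fintype.card_pos) (fun i _ => sq_nonneg (y i))
  simp only [Real.rpow_one, one_mul, sum_const, card_univ, nsmul_eq_mul, mul_one] at hamgm
  have hsplit : ∀ i, y i ^ (1 + 2 / n) = y i * (y i ^ 2) ^ n⁻¹ := fun i => by
    rw [rpow_add' (hy i) (by positivity), rpow_one, ← rpow_natCast, ← rpow_mul (hy i)]
    norm_num [div_eq_mul_inv]
  rw [mul_div_assoc, Finset.prod_congr rfl fun i _ => hsplit i, prod_mul_distrib,
    finsetProd_rpow _ _ fun i _ => sq_nonneg (y i)]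
  exact mul_le_mul_of_nonneg_left hamgm (prod_nonneg fun i _ => hy i)

lemma sum_prod_le_tsum_pow {f : ℕ → ℝ} (hf : ∀ m, 0 ≤ f m) (hsum : Summable f) (d n : ℕ) :
    ∑ k : Fin d → Fin n, ∏ j, f (k j) ≤ (∑' m, f m) ^ d := by
  rw [← Fintype.prod_sum (fun (_ : Fin d) (m : Fin n) => f m), prod_const, card_univ,
    Fintype.card_fin, Fin.sum_univ_eq_sum_range]
  exact pow_le_pow_left₀ (sum_nonneg fun m _ => hf m) (hsum.sum_le_tsum _ fun m _ => hf m) d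

section

variable {K d : ℕ} (k : Fin d → Fin (K - 1))

lemma sVal_eq {lam : ℝ} (hK : 0 < K) :
    sVal K d lam k = -(4 * lam * ∑ j, sin (π / 2 * ((((k j : ℕ) : ℝ) + 1) / K)) ^ 2) := by
  have hK' : (K : ℝ) ≠ 0 := by positivity
  simp only [sVal]
  field_simp

lemma four_mul_div_sq_mul_sum_sq_le_neg_sVal {lam : ℝ} (hK : 0 < K) (hlam : 0 ≤ lam) :
    4 * lam / K ^ 2 * ∑ j, (((k j : ℕ) : ℝ) + 1) ^ 2 ≤ -sVal K d lam k := by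
  have hK' : (0 : ℝ) < K := by exact_mod_cast hK
  rw [sVal_eq k hK, neg_neg]
  calc 4 * lam / K ^ 2 * ∑ j, (((k j : ℕ) : ℝ) + 1) ^ 2
      = 4 * lam * ∑ j, ((((k j : ℕ) : ℝ) + 1) / K) ^ 2 := by
        simp only [div_pow, ← sum_div]; ring
    _ ≤ 4 * lam * ∑ j, sin (π / 2 * ((((k j : ℕ) : ℝ) + 1) / K)) ^ 2 := by
        gcongr with j
        refine le_sin_pi_div_two_mul (by positivity) ((div_le_one hK').mpr ?_)
        exact_mod_cast (show (k j : ℕ) + 1 ≤ K by omega)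

lemma sVal_mem_Ico {lam : ℝ} (hd : 0 < d) (hK : 0 < K) (hlam : 0 < lam) :
    sVal K d lam k ∈ Set.Ico (-(4 * d * lam)) 0 := by
  have : Nonempty (Fin d) := Fin.pos_iff_nonempty.mp hd
  constructor
  · have hsum : ∑ j, sin (π / 2 * ((((k j : ℕ) : ℝ) + 1) / K)) ^ 2 ≤ d :=
      calc _ ≤ ∑ _j : Fin d, (1 : ℝ) := sum_le_sum fun j _ => sin_sq_le_one _
        _ = d := by simp
    rw [sVal_eq k hK, neg_le_neg_iff]
    nlinarith
  · have hsum : 0 < ∑ j, (((k j : ℕ) : ℝ) + 1) ^ 2 :=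
      sum_pos (fun j _ => by positivity) univ_nonempty
    have hlow := four_mul_div_sq_mul_sum_sq_le_neg_sVal k hK hlam.le
    have hpos : 0 < 4 * lam / K ^ 2 * ∑ j, (((k j : ℕ) : ℝ) + 1) ^ 2 := by positivity
    linarith

lemma onesDotV_eq_prod_sum :
    onesDotV K d k
      = ∏ j, ∑ i ∈ range (K - 1), sin (π * (i + 1) * (((k j : ℕ) : ℝ) + 1) / K) := by
  rw [onesDotV, ← Fintype.prod_sum (fun j (i : Fin (K - 1)) =>
    sin (π * (((i : ℕ) : ℝ) + 1) * (((k j : ℕ) : ℝ) + 1) / K))]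
  exact prod_congr rfl fun j _ =>
    Fin.sum_univ_eq_sum_range (fun i => sin (π * ((i : ℝ) + 1) * (((k j : ℕ) : ℝ) + 1) / K)) _

lemma onesDotV_le_prod : onesDotV K d k ≤ ∏ j, (K : ℝ) / (((k j : ℕ) : ℝ) + 1) := by
  have hbounds j := sum_sin_pi_mul_div_bounds (K := K) (m := (k j : ℕ) + 1) (by omega)
    (by have := (k j).2; omega)
  push_cast at hbounds
  rw [onesDotV_eq_prod_sum]
  exact prod_le_prod (fun j _ => (hbounds j).1) fun j _ => (hbounds j).2

lemma onesDotV_div_le {lam c : ℝ} {S : ℝ → ℝ} (hd : 0 < d) (hK : 0 < K) (hlam : 0 < lam)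
    (hc : 0 < c) (hcS : ∀ z ∈ Set.Ico (-(4 * d * lam)) 0, c * -z ≤ 1 - |S z|) :
    onesDotV K d k / (1 - |S (sVal K d lam k)|)
      ≤ K ^ (d + 2) / (4 * c * lam * d) * ∏ j, ((((k j : ℕ) : ℝ) + 1) ^ (1 + 2 / (d : ℝ)))⁻¹ := by
  have : Nonempty (Fin d) := Fin.pos_iff_nonempty.mp hd
  set y : Fin d → ℝ := fun j => ((k j : ℕ) : ℝ) + 1
  have hy j : 0 < y j := by positivity
  have hK' : (0 : ℝ) < K := by exact_mod_cast hK
  have hdenom : c * (4 * lam / K ^ 2 * ∑ j, y j ^ 2) ≤ 1 - |S (sVal K d lam k)| :=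
    (mul_le_mul_of_nonneg_left (four_mul_div_sq_mul_sum_sq_le_neg_sVal k hK hlam.le) hc.le).trans
      (hcS _ (sVal_mem_Ico k hd hK hlam))
  have hamgm := prod_rpow_one_add_two_div_le fun j => (hy j).le
  rw [Fintype.card_fin] at hamgm
  have hprod : 0 < ∏ j, y j := prod_pos fun j _ => hy j
  have hsum : 0 < ∑ j, y j ^ 2 := sum_pos (fun j _ => by positivity) univ_nonempty
  calc onesDotV K d k / (1 - |S (sVal K d lam k)|)
      ≤ (∏ j, K / y j) / (c * (4 * lam / K ^ 2 * ∑ j, y j ^ 2)) :=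
        div_le_div₀ (by positivity) (onesDotV_le_prod k) (by positivity) hdenom
    _ = K ^ (d + 2) / (4 * c * lam) / ((∏ j, y j) * ∑ j, y j ^ 2) := by
        rw [prod_div_distrib, prod_const, card_univ, Fintype.card_fin]
        field_simp
        ring
    _ ≤ K ^ (d + 2) / (4 * c * lam) / (d * ∏ j, y j ^ (1 + 2 / (d : ℝ))) := by
        refine div_le_div_of_nonneg_left (by positivity) (by positivity) ?_
        rwa [le_div_iff₀' (by positivity)] at hamgm
    _ = K ^ (d + 2) / (4 * c * lam * d) * ∏ j, (y j ^ (1 + 2 / (d : ℝ)))⁻¹ := by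
        rw [prod_inv_distrib]
        field_simp

end

/-- For `d ∈ {1,2,3}`:
`K^{−d} Σ_{k∈{1,…,K−1}^d} ⟨1, v_k⟩/(1 − |S(s_k)|) ≤ C̃ Δt⁻¹` with `Δt = λ/K²`. -/
theorem series_bound_ones_dot_v (d : ℕ) (hd : d = 1 ∨ d = 2 ∨ d = 3)
    (lam : ℝ) (hlam : 0 < lam) (S : ℝ → ℝ)
    (hcont : ContinuousOn S (Set.Icc (-(4 * (d : ℝ) * lam)) 0))
    (hS0 : S 0 = 1)
    (hSlt : ∀ z ∈ Set.Ico (-(4 * (d : ℝ) * lam)) 0, |S z| < 1)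
    (hderiv : HasDerivAt S 1 0) :
    ∃ C > 0, ∀ K : ℕ, 2 ≤ K →
      ((K : ℝ) ^ d)⁻¹ * ∑ k : Fin d → Fin (K - 1),
          onesDotV K d k / (1 - |S (sVal K d lam k)|)
        ≤ C * (lam / (K : ℝ) ^ 2)⁻¹ := by
  have hd0 : 0 < d := by omega
  obtain ⟨c, hc, hcS⟩ := exists_pos_mul_neg_le_one_sub_abs (by positivity) hcont hS0 hSlt hderiv
  set p : ℝ := 1 + 2 / d
  set f : ℕ → ℝ := fun m => (((m : ℝ) + 1) ^ p)⁻¹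
  have hf m : 0 ≤ f m := by positivity
  have hsum : Summable f := by
    have := (summable_nat_add_iff 1).mpr <|
      summable_nat_rpow_inv.mpr (lt_add_of_pos_right 1 (by positivity : (0 : ℝ) < 2 / d))
    simpa only [Nat.cast_add, Nat.cast_one] using this
  have hB : 0 < ∑' m, f m := hsum.tsum_pos hf 0 (by positivity)
  refine ⟨(∑' m, f m) ^ d / (4 * c * d), by positivity, fun K hK => ?_⟩
  have hK' : (0 : ℝ) < K := by positivity
  calc ((K : ℝ) ^ d)⁻¹ * ∑ k : Fin d → Fin (K - 1), onesDotV K d k / (1 - |S (sVal K d lam k)|)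
      ≤ ((K : ℝ) ^ d)⁻¹ * ∑ k : Fin d → Fin (K - 1),
          K ^ (d + 2) / (4 * c * lam * d) * ∏ j, f (k j) := by
        gcongr with k
        exact onesDotV_div_le k hd0 (by omega) hlam hc hcS
    _ = K ^ 2 / (4 * c * lam * d) * ∑ k : Fin d → Fin (K - 1), ∏ j, f (k j) := by
        rw [← mul_sum]
        field_simp
        ring
    _ ≤ K ^ 2 / (4 * c * lam * d) * (∑' m, f m) ^ d := by
        gcongr
        exact sum_prod_le_tsum_pow hf hsum d (K - 1)
    _ = (∑' m, f m) ^ d / (4 * c * d) * (lam / K ^ 2)⁻¹ := by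
        field_simp
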